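/- (Auxiliary identity in the flatness proof.) Let (T_0,…,T_{n−1}) be an extended D-connection. For j = 0,…,n−1 define T'_j: R^2(F) → R^{j+2}(F) by T'_j(m_1 m_2) = Σ_{i=0}^{j} T_i(m_1)T_{j−i}(m_2). Then T'_j is well defined on R^2(F) (i.e., Σ_i T_i(am_1)T_{j−i}(m_2) = Σ_i T_i(m_1)T_{j−i}(am_2) for all a ∈ A), and satisfies T'_j(aω) = a T'_j(ω) + Σ_{i=1}^{j} (1/(j+1−i)) T_{j−i}(D(a)) T'_{i−1}(ω) for all a ∈ A, ω ∈ R^2(F). -/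

import Mathlib

open scoped TensorProduct

noncomputable section

variable (A : Type) [CommRing A]
variable (F : Type) [AddCommGroup F] [Module A F]

/-- `n`-fold tensor power `T^n(F)`. -/
abbrev TPow (n : ℕ) := PiTensorProduct A (fun _ : Fin n => F)

/-- The submodule of symmetry relations. -/
def symRel (n : ℕ) : Submodule A (TPow A F n) :=
  Submodule.span A
    {x | ∃ (m : Fin n → F) (e : Equiv.Perm (Fin n)),
      x = PiTensorProduct.tprod A m - PiTensorProduct.tprod A (m ∘ e)}

/-- Symmetric power `S^n(F)`. -/
abbrev SymPow (n : ℕ) := TPow A F n ⧸ symRel A F n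

/-- Class of the word `m₀ ⋯ m_{n-1}` in `S^n(F)`. -/
def mkS {n : ℕ} (m : Fin n → F) : SymPow A F n :=
  Submodule.Quotient.mk (PiTensorProduct.tprod A m)

/-- Class of a list of elements of `F` in the symmetric power. -/
def mkSL (l : List F) : SymPow A F l.length := mkS A F l.get

/-- `RPow A F n` is `R^{n+1}(F) = S^n(F) ⊗_A F`. -/
abbrev RPow (n : ℕ) := SymPow A F n ⊗[A] F

/-- Class of the word `m₀ ⋯ m_n` in `R^{n+1}(F) = S^n(F) ⊗ F`. -/
def mkR {n : ℕ} (m : Fin (n + 1) → F) : RPow A F n :=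
  mkS A F (fun i : Fin n => m i.castSucc) ⊗ₜ[A] m (Fin.last n)

/-- The `i`-th "rotation" of the word `m` appearing in the definition of the
switch operator: `m_n m_{n-1} ⋯ m_{n-i+1} m_0 m_1 ⋯ m_{n-i}` (0-indexed). -/
def rot {n : ℕ} (m : Fin (n + 1) → F) (i : ℕ) : Fin (n + 1) → F := fun j =>
  if j.val < i then m ⟨n - j.val, by have := j.isLt; omega⟩
  else m ⟨j.val - i, by have := j.isLt; omega⟩

/-- `σ` is the switch operator on `R^{n+1}(F)`:
`σ(m_0⋯m_n) = ∑_{i=1}^{n} m_n m_{n-1}⋯m_{n-i+1} m_0 m_1 ⋯ m_{n-i}`. -/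
def IsSwitch (n : ℕ) (σ : RPow A F n →ₗ[A] RPow A F n) : Prop :=
  ∀ m : Fin (n + 1) → F,
    σ (mkR A F m) = ∑ i ∈ Finset.Icc 1 n, mkR A F (rot F m i)

/-- `K^{n+1}(F) = σ*(R^{n+1}(F))`, described by its generators `σ*(m_0⋯m_n)`. -/
def KSub (n : ℕ) : Submodule A (RPow A F n) :=
  Submodule.span A
    {x | ∃ m : Fin (n + 1) → F,
      x = mkR A F m + ∑ i ∈ Finset.Icc 1 n, mkR A F (rot F m i)}

/-- `K²(F) ⊆ T²(F) = F ⊗ F`: the kernel of `T²(F) → Λ²(F)`, i.e. the image of `1 + σ`. -/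
def K2Sub : Submodule A (F ⊗[A] F) :=
  Submodule.span A {x | ∃ u v : F, x = u ⊗ₜ[A] v + v ⊗ₜ[A] u}

/-- The word `m₀ ⋯ m_{p-1} u m'₀ ⋯ m'_{q-1}`. -/
def joinWord {p q : ℕ} (m : Fin p → F) (u : F) (m' : Fin q → F) :
    Fin (p + q + 1) → F := fun j =>
  if h : j.val < p then m ⟨j.val, h⟩
  else if _h2 : j.val < p + 1 then u
  else m' ⟨j.val - (p + 1), by have := j.isLt; omega⟩

/-- The concatenated word `m₀ ⋯ m_{p-1} m'₀ ⋯ m'_{q-1}`. -/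
def appendWord {p q : ℕ} (m : Fin p → F) (m' : Fin q → F) : Fin (p + q) → F := fun j =>
  if h : j.val < p then m ⟨j.val, h⟩
  else m' ⟨j.val - p, by have := j.isLt; omega⟩

/-- `mul` is the multiplication `R^{p+1}(F) × R^{q+1}(F) → R^{p+q+2}(F)` of the graded
algebra `R(F)`, recorded with values in `∏ₖ R^{k+1}(F)`:
`(s ⊗ u)·(s' ⊗ v) = (s u s') ⊗ v`. -/
def IsMulR (mul : ∀ p q, RPow A F p →ₗ[A] RPow A F q →ₗ[A] ∀ k, RPow A F k) : Prop :=
  ∀ (p q : ℕ) (m : Fin p → F) (u : F) (m' : Fin q → F) (v : F),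
    mul p q (mkS A F m ⊗ₜ[A] u) (mkS A F m' ⊗ₜ[A] v)
      = Pi.single (p + q + 1) (mkS A F (joinWord F m u m') ⊗ₜ[A] v)

/-- `mul` is the multiplication `S^p(F) × S^q(F) → S^{p+q}(F)` of the symmetric algebra,
recorded with values in `∏ₖ S^k(F)`. -/
def IsMulS (mul : ∀ p q, SymPow A F p →ₗ[A] SymPow A F q →ₗ[A] ∀ k, SymPow A F k) : Prop :=
  ∀ (p q : ℕ) (m : Fin p → F) (m' : Fin q → F),
    mul p q (mkS A F m) (mkS A F m') = Pi.single (p + q) (mkS A F (appendWord F m m'))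

/-- `π` is the family of natural maps `R^{n+1}(F) = S^n(F) ⊗ F → S^{n+1}(F)`. -/
def IsPi (π : ∀ n, RPow A F n →ₗ[A] SymPow A F (n + 1)) : Prop :=
  ∀ (n : ℕ) (m : Fin n → F) (v : F),
    π n (mkS A F m ⊗ₜ[A] v) = mkS A F (Fin.snoc m v)

/-- `T = (T₀, T₁, …)` is a (full) extended `D`-connection:  `T₀ = id_F` (under
`F ≅ R¹(F)`), and `T_i(am) = a T_i(m) + ∑_{j=1}^i (1/j) T_{j-1}(D a) T_{i-j}(m)`. -/
def IsExtConn [Algebra ℚ A] (D : A → F)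
    (mul : ∀ p q, RPow A F p →ₗ[A] RPow A F q →ₗ[A] ∀ k, RPow A F k)
    (T : ∀ i, F →+ RPow A F i) : Prop :=
  (∀ m : F, T 0 m = mkS A F (fun i : Fin 0 => i.elim0) ⊗ₜ[A] m) ∧
  ∀ (i : ℕ), 1 ≤ i → ∀ (a : A) (m : F),
    Pi.single i (T i (a • m))
      = Pi.single i (a • T i m)
        + ∑ j ∈ Finset.Icc 1 i,
            algebraMap ℚ A (1 / (j : ℚ)) •
              mul (j - 1) (i - j) (T (j - 1) (D a)) (T (i - j) m)

/-- `T = (T₀, …, T_N)` is an extended `D`-connection up to order `N`. -/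
def IsExtConnTo [Algebra ℚ A] (D : A → F)
    (mul : ∀ p q, RPow A F p →ₗ[A] RPow A F q →ₗ[A] ∀ k, RPow A F k)
    (N : ℕ) (T : ∀ i, F →+ RPow A F i) : Prop :=
  (∀ m : F, T 0 m = mkS A F (fun i : Fin 0 => i.elim0) ⊗ₜ[A] m) ∧
  ∀ (i : ℕ), 1 ≤ i → i ≤ N → ∀ (a : A) (m : F),
    Pi.single i (T i (a • m))
      = Pi.single i (a • T i m)
        + ∑ j ∈ Finset.Icc 1 i,
            algebraMap ℚ A (1 / (j : ℚ)) •
              mul (j - 1) (i - j) (T (j - 1) (D a)) (T (i - j) m)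

/-- The wedge map `F ⊗_A F →  Λ(F)`, `u ⊗ v ↦ u ∧ v`; an element of `F ⊗ F` maps to
zero in `Λ²(F)` iff its image under this map is zero. -/
def wedgeMap : F ⊗[A] F →ₗ[A] ExteriorAlgebra A F :=
  TensorProduct.lift
    ((LinearMap.mul A (ExteriorAlgebra A F)).compl₁₂ (ExteriorAlgebra.ι A) (ExteriorAlgebra.ι A))

/-!
Expanding `T_i(a m₁)` by the Leibniz rule produces correction terms
`(1/k) T_{k-1}(Da) T_{i-k}(m₁) T_{j-i}(m₂)`. Since the product of `R(F)` is associative and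
commutative on three factors, both these terms and those of `T_{j-i}(a m₂)` are sums over the
compositions `k + p + q = j` with `k ≥ 1`, which gives well-definedness; grouping the same terms by
`p + q` instead gives the Leibniz rule for `T'_j`. Associativity and commutativity are checked on
words, where they amount to permuting the letters of a symmetric power.
-/

def Fin.swapBlocks (a b : ℕ) {n : ℕ} (h : a + b ≤ n) : Equiv.Perm (Fin n) where
  toFun j := ⟨if j < a then j + b else if j < a + b then j - a else j, by
    have := j.isLt; split_ifs <;> omega⟩
  invFun j := ⟨if j < b then j + a else if j < a + b then j - b else j, by
    have := j.isLt; split_ifs <;> omega⟩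
  left_inv j := by ext; simp only; split_ifs <;> omega
  right_inv j := by ext; simp only; split_ifs <;> omega

theorem Finset.sum_range_sum_Icc_eq_sum_range_sum_Icc_sub {V : Type*} [AddCommMonoid V] (j : ℕ)
    (E : ℕ → ℕ → ℕ → V) :
    ∑ i ∈ range (j + 1), ∑ k ∈ Icc 1 i, E k (i - k) (j - i)
      = ∑ i ∈ range (j + 1), ∑ k ∈ Icc 1 (j - i), E k i (j - i - k) := by
  rw [sum_sigma', sum_sigma']
  refine sum_bij' (fun x _ => ⟨x.1 - x.2, x.2⟩) (fun x _ => ⟨x.1 + x.2, x.2⟩) ?_ ?_ ?_ ?_ ?_ <;>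
    rintro ⟨i, k⟩ h <;> simp only [mem_sigma, mem_range, mem_Icc] at h ⊢
  · omega
  · omega
  · exact Sigma.ext (by dsimp only; omega) (heq_of_eq rfl)
  · exact Sigma.ext (by dsimp only; omega) (heq_of_eq rfl)
  · rw [show j - (i - k) - k = j - i by omega]

theorem Finset.sum_range_sum_Icc_eq_sum_range_sum_range {V : Type*} [AddCommMonoid V] (j : ℕ)
    (E : ℕ → ℕ → ℕ → V) :
    ∑ i ∈ range (j + 1), ∑ k ∈ Icc 1 i, E k (i - k) (j - i)
      = ∑ i ∈ range j, ∑ p ∈ range (i + 1), E (j - i) p (i - p) := by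
  rw [sum_sigma', sum_sigma']
  refine sum_bij' (fun x _ => ⟨j - x.2, x.1 - x.2⟩) (fun x _ => ⟨x.2 + (j - x.1), j - x.1⟩)
    ?_ ?_ ?_ ?_ ?_ <;> rintro ⟨i, k⟩ h <;> simp only [mem_sigma, mem_range, mem_Icc] at h ⊢
  · omega
  · omega
  · exact Sigma.ext (by dsimp only; omega) (heq_of_eq (by dsimp only; omega))
  · exact Sigma.ext (by dsimp only; omega) (heq_of_eq (by dsimp only; omega))
  · rw [show j - (j - k) = k by omega, show j - k - (i - k) = j - i by omega]

section RPow

variable {A F}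

theorem mkS_comp_perm {n : ℕ} (m : Fin n → F) (e : Equiv.Perm (Fin n)) :
    mkS A F (m ∘ e) = mkS A F m := by
  rw [mkS, mkS, eq_comm, Submodule.Quotient.eq]
  exact Submodule.subset_span ⟨m, e, rfl⟩

theorem single_mkS_tmul_eq_of_equiv {N₁ N₂ : ℕ} (e : Fin N₁ ≃ Fin N₂) {m₁ : Fin N₁ → F}
    {m₂ : Fin N₂ → F} (hm : ∀ j, m₁ j = m₂ (e j)) (w : F) :
    (Pi.single N₁ (mkS A F m₁ ⊗ₜ[A] w) : ∀ k, RPow A F k) = Pi.single N₂ (mkS A F m₂ ⊗ₜ[A] w) := by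
  obtain rfl := Fin.equiv_iff_eq.mp ⟨e⟩
  rw [show m₁ = m₂ ∘ e from funext hm, mkS_comp_perm]

theorem RPow.linearMap_ext {M : Type*} [AddCommMonoid M] [Module A M] {p : ℕ}
    {f g : RPow A F p →ₗ[A] M} (h : ∀ m v, f (mkS A F m ⊗ₜ v) = g (mkS A F m ⊗ₜ v)) :
    f = g :=
  TensorProduct.ext' fun s v => Submodule.Quotient.induction_on _ s fun t =>
    LinearMap.congr_fun
      (f := f ∘ₗ (TensorProduct.mk A _ F).flip v ∘ₗ Submodule.mkQ _)
      (g := g ∘ₗ (TensorProduct.mk A _ F).flip v ∘ₗ Submodule.mkQ _)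
      (PiTensorProduct.ext <| MultilinearMap.ext fun m => h m v) t

theorem RPow.bilinearMap_ext {M : Type*} [AddCommMonoid M] [Module A M] {p q : ℕ}
    {f g : RPow A F p →ₗ[A] RPow A F q →ₗ[A] M}
    (h : ∀ m u m' v, f (mkS A F m ⊗ₜ u) (mkS A F m' ⊗ₜ v) = g (mkS A F m ⊗ₜ u) (mkS A F m' ⊗ₜ v)) :
    f = g :=
  RPow.linearMap_ext fun m u => RPow.linearMap_ext fun m' v => h m u m' v

theorem RPow.trilinearMap_ext {M : Type*} [AddCommMonoid M] [Module A M] {p q r : ℕ}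
    {f g : RPow A F p →ₗ[A] RPow A F q →ₗ[A] RPow A F r →ₗ[A] M}
    (h : ∀ m u m' v m'' w, f (mkS A F m ⊗ₜ u) (mkS A F m' ⊗ₜ v) (mkS A F m'' ⊗ₜ w)
      = g (mkS A F m ⊗ₜ u) (mkS A F m' ⊗ₜ v) (mkS A F m'' ⊗ₜ w)) :
    f = g :=
  RPow.linearMap_ext fun m u => RPow.bilinearMap_ext fun m' v m'' w => h m u m' v m'' w

end RPow

namespace IsMulR

variable {A F} {mul : ∀ p q, RPow A F p →ₗ[A] RPow A F q →ₗ[A] ∀ k, RPow A F k}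
  (hmul : IsMulR A F mul)
include hmul

theorem eq_single {p q N : ℕ} (hN : N = p + q + 1) (x : RPow A F p) (y : RPow A F q) :
    mul p q x y = Pi.single N (mul p q x y N) := by
  subst hN
  suffices (mul p q).compr₂ (LinearMap.single A (fun k => RPow A F k) (p + q + 1) ∘ₗ
      LinearMap.proj (p + q + 1)) = mul p q from (LinearMap.congr_fun₂ this x y).symm
  refine RPow.bilinearMap_ext fun m u m' v => ?_
  simp [hmul p q m u m' v]

theorem assoc {p q r N M : ℕ} (hN : N = p + q + 1) (hM : M = q + r + 1)
    (x : RPow A F p) (y : RPow A F q) (z : RPow A F r) :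
    mul N r (mul p q x y N) z = mul p M x (mul q r y z M) := by
  subst hN hM
  -- both sides are `A`-trilinear in `(x, y, z)`, so they only need to agree on words
  suffices ((mul p q).compr₂ (LinearMap.proj _)).compr₂ (mul _ r) =
      (LinearMap.llcomp A _ _ _ ∘ₗ mul p _).compl₂ ((mul q r).compr₂ (LinearMap.proj _))
    from LinearMap.congr_fun (LinearMap.congr_fun₂ this x y) z
  refine RPow.trilinearMap_ext fun m u m' v m'' w => ?_
  simp only [LinearMap.compr₂_apply, LinearMap.compl₂_apply, LinearMap.coe_comp,
    Function.comp_apply, LinearMap.llcomp_apply, LinearMap.proj_apply]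
  rw [hmul p q m u m' v, hmul q r m' v m'' w, Pi.single_eq_same, Pi.single_eq_same,
    hmul _ r _ v m'' w, hmul p _ m u _ w]
  refine single_mkS_tmul_eq_of_equiv (finCongr (by omega)) (fun j => ?_) w
  have := j.isLt
  simp only [joinWord, finCongr_apply, Fin.val_cast]
  split_ifs <;> first | rfl | omega | (congr 1; ext; simp only; omega)

theorem left_comm {p q r N M : ℕ} (hN : N = p + q + 1) (hM : M = p + r + 1)
    (x : RPow A F p) (y : RPow A F q) (z : RPow A F r) :
    mul N r (mul p q x y N) z = mul q M y (mul p r x z M) := by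
  subst hN hM
  suffices ((mul p q).compr₂ (LinearMap.proj _)).compr₂ (mul _ r) =
      ((LinearMap.llcomp A _ _ _ ∘ₗ mul q _).compl₂ ((mul p r).compr₂ (LinearMap.proj _))).flip
    from LinearMap.congr_fun (LinearMap.congr_fun₂ this x y) z
  refine RPow.trilinearMap_ext fun m u m' v m'' w => ?_
  simp only [LinearMap.compr₂_apply, LinearMap.compl₂_apply, LinearMap.coe_comp,
    LinearMap.flip_apply, Function.comp_apply, LinearMap.llcomp_apply, LinearMap.proj_apply]
  rw [hmul p q m u m' v, hmul p r m u m'' w, Pi.single_eq_same, Pi.single_eq_same,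
    hmul _ r _ v m'' w, hmul q _ m' v _ w]
  refine single_mkS_tmul_eq_of_equiv
    ((Fin.swapBlocks (p + 1) (q + 1) (by omega)).trans (finCongr (by omega))) (fun j => ?_) w
  have := j.isLt
  simp only [joinWord, Fin.swapBlocks, Equiv.trans_apply, Equiv.coe_fn_mk, finCongr_apply,
    Fin.val_cast]
  split_ifs <;> first | rfl | omega | (congr 1; ext; simp only; omega)

end IsMulR

section Tprime

variable {A F} {mul : ∀ p q, RPow A F p →ₗ[A] RPow A F q →ₗ[A] ∀ k, RPow A F k}
  {T : ∀ i, F →+ RPow A F i}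

variable (mul T) in
def tprimeSum (j : ℕ) (m₁ m₂ : F) : ∀ k, RPow A F k :=
  ∑ i ∈ Finset.range (j + 1), mul i (j - i) (T i m₁) (T (j - i) m₂)

theorem tprimeSum_eq_single (hmul : IsMulR A F mul) (j : ℕ) (m₁ m₂ : F) :
    tprimeSum mul T j m₁ m₂ = Pi.single (j + 1) (tprimeSum mul T j m₁ m₂ (j + 1)) := by
  rw [tprimeSum, Finset.sum_apply]
  exact (Finset.sum_congr rfl fun i hi =>
    hmul.eq_single (by simp only [Finset.mem_range] at hi; omega) _ _).trans
      (map_sum (LinearMap.single A (fun k => RPow A F k) (j + 1)) _ _).symm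

variable (mul T) in
def tprimeBihom (j : ℕ) : F →+ F →+ RPow A F (j + 1) :=
  AddMonoidHom.mk' (fun m₁ => AddMonoidHom.mk' (fun m₂ => tprimeSum mul T j m₁ m₂ (j + 1))
    fun _ _ => by simp [tprimeSum, Finset.sum_add_distrib])
    fun _ _ => by ext; simp [tprimeSum, Finset.sum_add_distrib]

-- Off the range where `tprimeBihom` is `A`-balanced, `tprime` takes the junk value `0`.
open Classical in
variable (mul T) in
def tprime (j : ℕ) : F ⊗[A] F →+ RPow A F (j + 1) :=
  if h : ∀ (a : A) m₁ m₂, tprimeBihom mul T j (a • m₁) m₂ = tprimeBihom mul T j m₁ (a • m₂) then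
    TensorProduct.liftAddHom (tprimeBihom mul T j) h
  else 0

variable [Algebra ℚ A] {D : A → F} {N : ℕ}

theorem IsExtConnTo.smul_apply (hT : IsExtConnTo A F D mul N T) {i : ℕ} (hi : i ≤ N) (a : A)
    (m : F) :
    T i (a • m) = a • T i m + ∑ k ∈ Finset.Icc 1 i,
      algebraMap ℚ A (1 / (k : ℚ)) • mul (k - 1) (i - k) (T (k - 1) (D a)) (T (i - k) m) i := by
  rcases Nat.eq_zero_or_pos i with rfl | hi₀
  · simp [hT.1, TensorProduct.tmul_smul]
  · simpa using congrFun (hT.2 i hi₀ hi a m) i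

theorem tprimeSum_smul_left_expand (hT : IsExtConnTo A F D mul N T) {j : ℕ} (hj : j ≤ N)
    (a : A) (m₁ m₂ : F) :
    tprimeSum mul T j (a • m₁) m₂ = a • tprimeSum mul T j m₁ m₂
      + ∑ i ∈ Finset.range (j + 1), ∑ k ∈ Finset.Icc 1 i, algebraMap ℚ A (1 / (k : ℚ)) •
          mul i (j - i) (mul (k - 1) (i - k) (T (k - 1) (D a)) (T (i - k) m₁) i)
            (T (j - i) m₂) := by
  simp only [tprimeSum, Finset.smul_sum, ← Finset.sum_add_distrib]
  refine Finset.sum_congr rfl fun i hi => ?_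
  rw [hT.smul_apply (by simp only [Finset.mem_range] at hi; omega)]
  simp only [map_add, map_smul, map_sum, LinearMap.add_apply, LinearMap.smul_apply,
    LinearMap.sum_apply]

theorem tprimeSum_smul_right_expand (hT : IsExtConnTo A F D mul N T) {j : ℕ} (hj : j ≤ N)
    (a : A) (m₁ m₂ : F) :
    tprimeSum mul T j m₁ (a • m₂) = a • tprimeSum mul T j m₁ m₂
      + ∑ i ∈ Finset.range (j + 1), ∑ k ∈ Finset.Icc 1 (j - i), algebraMap ℚ A (1 / (k : ℚ)) •
          mul i (j - i) (T i m₁)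
            (mul (k - 1) (j - i - k) (T (k - 1) (D a)) (T (j - i - k) m₂) (j - i)) := by
  simp only [tprimeSum, Finset.smul_sum, ← Finset.sum_add_distrib]
  refine Finset.sum_congr rfl fun i _ => ?_
  rw [hT.smul_apply (by omega)]
  simp only [map_add, map_smul, map_sum]

theorem tprimeSum_smul_left_eq_smul_right (hmul : IsMulR A F mul)
    (hT : IsExtConnTo A F D mul N T) {j : ℕ} (hj : j ≤ N) (a : A) (m₁ m₂ : F) :
    tprimeSum mul T j (a • m₁) m₂ = tprimeSum mul T j m₁ (a • m₂) := by
  rw [tprimeSum_smul_left_expand hT hj, tprimeSum_smul_right_expand hT hj]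
  congr 1
  let E (k p q : ℕ) := algebraMap ℚ A (1 / (k : ℚ)) • mul p (k - 1 + q + 1) (T p m₁)
    (mul (k - 1) q (T (k - 1) (D a)) (T q m₂) (k - 1 + q + 1))
  calc _ = ∑ i ∈ Finset.range (j + 1), ∑ k ∈ Finset.Icc 1 i, E k (i - k) (j - i) := by
        refine Finset.sum_congr rfl fun i _ => Finset.sum_congr rfl fun k hk => ?_
        rw [Finset.mem_Icc] at hk
        rw [hmul.left_comm (by omega) rfl]
    _ = ∑ i ∈ Finset.range (j + 1), ∑ k ∈ Finset.Icc 1 (j - i), E k i (j - i - k) :=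
        Finset.sum_range_sum_Icc_eq_sum_range_sum_Icc_sub j E
    _ = _ := by
        refine Finset.sum_congr rfl fun i _ => Finset.sum_congr rfl fun k hk => ?_
        rw [Finset.mem_Icc] at hk
        simp only [E]
        rw [show k - 1 + (j - i - k) + 1 = j - i by omega]

theorem tprimeSum_smul_left (hmul : IsMulR A F mul) (hT : IsExtConnTo A F D mul N T) {j : ℕ}
    (hj : j ≤ N) (a : A) (m₁ m₂ : F) :
    tprimeSum mul T j (a • m₁) m₂ = a • tprimeSum mul T j m₁ m₂
      + ∑ i ∈ Finset.range j, algebraMap ℚ A (1 / ((j : ℚ) - (i : ℚ))) •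
          mul (j - (i + 1)) (i + 1) (T (j - (i + 1)) (D a)) (tprimeSum mul T i m₁ m₂ (i + 1)) := by
  rw [tprimeSum_smul_left_expand hT hj]
  congr 1
  let E (k p q : ℕ) := algebraMap ℚ A (1 / (k : ℚ)) • mul (k - 1) (p + q + 1) (T (k - 1) (D a))
    (mul p q (T p m₁) (T q m₂) (p + q + 1))
  calc _ = ∑ i ∈ Finset.range (j + 1), ∑ k ∈ Finset.Icc 1 i, E k (i - k) (j - i) := by
        refine Finset.sum_congr rfl fun i _ => Finset.sum_congr rfl fun k hk => ?_
        rw [Finset.mem_Icc] at hk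
        rw [hmul.assoc (by omega) rfl]
    _ = ∑ i ∈ Finset.range j, ∑ p ∈ Finset.range (i + 1), E (j - i) p (i - p) :=
        Finset.sum_range_sum_Icc_eq_sum_range_sum_range j E
    _ = _ := by
        refine Finset.sum_congr rfl fun i hi => ?_
        rw [Finset.mem_range] at hi
        rw [tprimeSum, Finset.sum_apply, map_sum, Finset.smul_sum, ← Nat.cast_sub hi.le]
        refine Finset.sum_congr rfl fun p hp => ?_
        rw [Finset.mem_range] at hp
        simp only [E]
        rw [Nat.sub_sub, show p + (i - p) + 1 = i + 1 by omega]

theorem single_tprime_tmul (hmul : IsMulR A F mul) (hT : IsExtConnTo A F D mul N T) {j : ℕ}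
    (hj : j ≤ N) (m₁ m₂ : F) :
    Pi.single (j + 1) (tprime mul T j (m₁ ⊗ₜ m₂)) = tprimeSum mul T j m₁ m₂ := by
  have hbalanced : ∀ (a : A) m₁ m₂,
      tprimeBihom mul T j (a • m₁) m₂ = tprimeBihom mul T j m₁ (a • m₂) := fun a m₁ m₂ =>
    congrFun (tprimeSum_smul_left_eq_smul_right hmul hT hj a m₁ m₂) (j + 1)
  rw [tprime, dif_pos hbalanced, TensorProduct.liftAddHom_tmul]
  exact (tprimeSum_eq_single hmul j m₁ m₂).symm

theorem single_tprime_smul (hmul : IsMulR A F mul) (hT : IsExtConnTo A F D mul N T) {j : ℕ}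
    (hj : j ≤ N) (a : A) (ω : F ⊗[A] F) :
    Pi.single (j + 1) (tprime mul T j (a • ω)) = Pi.single (j + 1) (a • tprime mul T j ω)
      + ∑ i ∈ Finset.range j, algebraMap ℚ A (1 / ((j : ℚ) - (i : ℚ))) •
          mul (j - (i + 1)) (i + 1) (T (j - (i + 1)) (D a)) (tprime mul T i ω) := by
  induction ω using TensorProduct.induction_on with
  | zero => simp
  | add x y hx hy =>
    simp only [smul_add, map_add, Pi.single_add, Finset.sum_add_distrib, hx, hy]
    abel
  | tmul m₁ m₂ =>
    have htprime : ∀ i ≤ j, tprime mul T i (m₁ ⊗ₜ m₂) = tprimeSum mul T i m₁ m₂ (i + 1) :=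
      fun i hi => by simpa using congrFun (single_tprime_tmul hmul hT (hi.trans hj) m₁ m₂) (i + 1)
    rw [TensorProduct.smul_tmul', single_tprime_tmul hmul hT hj, Pi.single_smul,
      single_tprime_tmul hmul hT hj, tprimeSum_smul_left hmul hT hj]
    congr 1
    exact Finset.sum_congr rfl fun i hi => by rw [htprime i (Finset.mem_range.1 hi).le]

end Tprime

/-- auxiliary identity in the flatness proof.  Given an extended
`D`-connection `(T₀, …, T_{n-1})`, the maps `T'_j(m₁ m₂) = ∑_{i=0}^j T_i(m₁) T_{j-i}(m₂)`
are well defined on `R²(F) = F ⊗ F` and satisfy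
`T'_j(aω) = a T'_j(ω) + ∑_{i=1}^j (1/(j+1-i)) T_{j-i}(D a) T'_{i-1}(ω)`. -/
theorem Tprime_wellDefined [Algebra ℚ A]
    (B : Type) [CommRing B] [Algebra B A] [Module B F] [IsScalarTower B A F]
    (D : Derivation B A F)
    (mul : ∀ p q, RPow A F p →ₗ[A] RPow A F q →ₗ[A] ∀ k, RPow A F k)
    (hmul : IsMulR A F mul)
    (n : ℕ)
    (T : ∀ i, F →+ RPow A F i)
    (hT : IsExtConnTo A F (⇑D) mul (n - 1) T) :
    (∀ j ≤ n - 1, ∀ (a : A) (m₁ m₂ : F),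
      ∑ i ∈ Finset.range (j + 1), mul i (j - i) (T i (a • m₁)) (T (j - i) m₂)
        = ∑ i ∈ Finset.range (j + 1), mul i (j - i) (T i m₁) (T (j - i) (a • m₂)))
    ∧ ∃ T' : ∀ j, F ⊗[A] F →+ RPow A F (j + 1),
        (∀ j ≤ n - 1, ∀ m₁ m₂ : F,
          Pi.single (j + 1) (T' j (m₁ ⊗ₜ[A] m₂))
            = ∑ i ∈ Finset.range (j + 1), mul i (j - i) (T i m₁) (T (j - i) m₂))
        ∧ ∀ j ≤ n - 1, ∀ (a : A) (ω : F ⊗[A] F),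
            Pi.single (j + 1) (T' j (a • ω))
              = Pi.single (j + 1) (a • T' j ω)
                + ∑ i ∈ Finset.range j,
                    algebraMap ℚ A (1 / ((j : ℚ) - (i : ℚ))) •
                      mul (j - (i + 1)) (i + 1) (T (j - (i + 1)) (D a)) (T' i ω) :=
  ⟨fun _ hj => tprimeSum_smul_left_eq_smul_right hmul hT hj, tprime mul T,
    fun _ hj => single_tprime_tmul hmul hT hj, fun _ hj => single_tprime_smul hmul hT hj⟩

end
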